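/- Let B(z) = ((2z²/√10 − √10·z/2)/(2−z), (z²/√10)/(2−z)) for z ∈ 𝔻. Then ‖B(z)‖² = |b_1(z)|² + |b_2(z)|² ≤ 1 for all z ∈ 𝔻, and B(0) = 0; moreover 1 − ⟨B(z), B(w)⟩ = (1 − z·conj(w))·K_w(z) where K_w(z) is the kernel (1 − (z conj(w))((1/2) z conj(w) − z − conj(w) + 5/2)/((2−z)(2−conj(w))))/(1 − z conj(w)). -/

import Mathlib

/-! The components of `B` have real coefficients, so `⟨B(z), B(w)⟩` is the symmetric bilinear
form `b1 z * b1 u + b2 z * b2 u` at `u = conj w`; that form is a rational function with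
denominator `(2 - z) * (2 - u)`. Its value on the diagonal `u = conj z` depends only on `|z|`
and `Re z`, and the contraction bound reduces to a one-variable inequality in `|z|` after
bounding `Re z ≤ |z|`. -/

open Complex

noncomputable def b1 (z : ℂ) : ℂ :=
  (2 * z ^ 2 / (Real.sqrt 10 : ℂ) - (Real.sqrt 10 : ℂ) * z / 2) / (2 - z)

noncomputable def b2 (z : ℂ) : ℂ := (z ^ 2 / (Real.sqrt 10 : ℂ)) / (2 - z)

/-- The reproducing kernel of `𝒟(δ₁ + δ₀)`. -/
noncomputable def Kker (w z : ℂ) : ℂ :=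
  (1 - (z * (starRingEnd ℂ) w) *
      ((1 / 2) * z * (starRingEnd ℂ) w - z - (starRingEnd ℂ) w + 5 / 2) /
      ((2 - z) * (2 - (starRingEnd ℂ) w))) / (1 - z * (starRingEnd ℂ) w)

open ComplexConjugate

lemma sqrt_ten_mul_self : (Real.sqrt 10 : ℂ) * Real.sqrt 10 = 10 := by
  rw [← ofReal_mul, Real.mul_self_sqrt (by norm_num)]; norm_num

lemma b1_eq_div (z : ℂ) : b1 z = z * (2 * z - 5) / (Real.sqrt 10 * (2 - z)) := by
  have hs : (Real.sqrt 10 : ℂ) ≠ 0 := by simp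
  rw [b1, ← div_div]
  congr 1
  field_simp
  linear_combination -z * sqrt_ten_mul_self

lemma b2_eq_div (z : ℂ) : b2 z = z ^ 2 / (Real.sqrt 10 * (2 - z)) := by
  rw [b2, div_div]

lemma conj_b1 (z : ℂ) : conj (b1 z) = b1 (conj z) := by
  simp [b1, map_div₀, conj_ofReal, map_ofNat]

lemma conj_b2 (z : ℂ) : conj (b2 z) = b2 (conj z) := by
  simp [b2, map_div₀, conj_ofReal, map_ofNat]

lemma b1_mul_add_b2_mul (z u : ℂ) :
    b1 z * b1 u + b2 z * b2 u =
      z * u * (1 / 2 * z * u - z - u + 5 / 2) / ((2 - z) * (2 - u)) := by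
  have hden :
      (Real.sqrt 10 * (2 - z)) * (Real.sqrt 10 * (2 - u)) = 10 * ((2 - z) * (2 - u)) := by
    linear_combination ((2 - z) * (2 - u)) * sqrt_ten_mul_self
  rw [b1_eq_div, b1_eq_div, b2_eq_div, b2_eq_div, div_mul_div_comm, div_mul_div_comm, ← add_div,
    hden, mul_comm 10, ← div_div]
  ring

lemma sq_norm_b1_add_sq_norm_b2 (z : ℂ) :
    ‖b1 z‖ ^ 2 + ‖b2 z‖ ^ 2 =
      ‖z‖ ^ 2 * (‖z‖ ^ 2 / 2 - 2 * z.re + 5 / 2) / (4 - 4 * z.re + ‖z‖ ^ 2) := by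
  apply ofReal_injective
  have hden : (2 - z) * (2 - conj z) = 4 - 2 * (z + conj z) + z * conj z := by ring
  have hnum : 1 / 2 * z * conj z - z - conj z + 5 / 2 =
      1 / 2 * (z * conj z) - (z + conj z) + 5 / 2 := by
    ring
  push_cast
  rw [← mul_conj', ← mul_conj', conj_b1, conj_b2, b1_mul_add_b2_mul, hden, hnum, mul_conj',
    add_conj]
  push_cast
  ring

lemma sq_mul_le_of_re_le {s x : ℝ} (hs0 : 0 ≤ s) (hs1 : s < 1) (hx : x ≤ s) :
    s ^ 2 * (s ^ 2 / 2 - 2 * x + 5 / 2) ≤ 4 - 4 * x + s ^ 2 := by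
  -- at `x = s` the difference of the two sides is `(1 - s) * (s ^ 3 - 3 * s ^ 2 + 8) / 2`
  have hcubic : 0 ≤ s ^ 3 - 3 * s ^ 2 + 8 := by nlinarith
  nlinarith [mul_nonneg (sub_nonneg.2 hs1.le) hcubic, mul_nonneg (sub_nonneg.2 hx)
    (by nlinarith : (0 : ℝ) ≤ 4 - 2 * s ^ 2)]

lemma sq_norm_b1_add_sq_norm_b2_le_one {z : ℂ} (hz : ‖z‖ < 1) :
    ‖b1 z‖ ^ 2 + ‖b2 z‖ ^ 2 ≤ 1 := by
  rw [sq_norm_b1_add_sq_norm_b2, div_le_one (by nlinarith [norm_nonneg z, re_le_norm z])]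
  exact sq_mul_le_of_re_le (norm_nonneg z) hz (re_le_norm z)

lemma one_sub_mul_conj_ne_zero {z w : ℂ} (hz : ‖z‖ < 1) (hw : ‖w‖ < 1) :
    1 - z * conj w ≠ 0 := by
  refine sub_ne_zero.2 fun h => ?_
  have : ‖z * conj w‖ < 1 := by
    rw [norm_mul, RCLike.norm_conj]
    exact mul_lt_one_of_nonneg_of_lt_one_left (norm_nonneg z) hz hw.le
  simp [← h] at this

theorem stmt11 :
    (∀ z : ℂ, ‖z‖ < 1 → ‖b1 z‖ ^ 2 + ‖b2 z‖ ^ 2 ≤ 1) ∧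
    (b1 0 = 0 ∧ b2 0 = 0) ∧
    (∀ z w : ℂ, ‖z‖ < 1 → ‖w‖ < 1 →
      1 - (b1 z * (starRingEnd ℂ) (b1 w) + b2 z * (starRingEnd ℂ) (b2 w))
        = (1 - z * (starRingEnd ℂ) w) * Kker w z) := by
  refine ⟨fun z hz => sq_norm_b1_add_sq_norm_b2_le_one hz, ⟨by simp [b1], by simp [b2]⟩, ?_⟩
  intro z w hz hw
  rw [conj_b1, conj_b2, b1_mul_add_b2_mul, Kker,
    mul_div_cancel₀ _ (one_sub_mul_conj_ne_zero hz hw)]
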